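/- Fix n ∈ ℕ. The linear span of the set {A_n ψ_{2m} − A_m ψ_{2n}, B_n ψ_{2m+1} − B_m ψ_{2n+1} : m ∈ ℕ, m ≠ n}, where A_k = √((2k)!)/(2^k k!) and B_k = √((2k+1)!)/(2^k k!) and (ψ_k) is the Hermite orthonormal basis, is dense in L²(ℝ). -/
import Mathlib


open MeasureTheory Real

/-- Physicists' Hermite polynomials. -/
noncomputable def H : ℕ → ℝ → ℝ
  | 0 => fun _ => 1
  | 1 => fun q => 2 * q
  | (n + 2) => fun q => 2 * q * H (n + 1) q - 2 * (n + 1) * H n q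

/-- Normalized Hermite functions. -/
noncomputable def ψ (n : ℕ) (q : ℝ) : ℝ :=
  (Real.sqrt (2 ^ n * n.factorial * Real.sqrt Real.pi))⁻¹ * H n q * Real.exp (-q ^ 2 / 2)

noncomputable def A (k : ℕ) : ℝ := Real.sqrt ((2 * k).factorial) / (2 ^ k * k.factorial)

noncomputable def B (k : ℕ) : ℝ := Real.sqrt ((2 * k + 1).factorial) / (2 ^ k * k.factorial)

lemma nat_key (m : ℕ) :
    4 ^ m * (m.factorial * m.factorial) ≤ 3 * (m + 1) * (2 * m).factorial := by
  have hcb : m.centralBinom * m.factorial * m.factorial = (2 * m).factorial := by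
    have := Nat.choose_mul_factorial_mul_factorial (n := 2 * m) (k := m) (by omega)
    simpa [Nat.centralBinom, show 2 * m - m = m by omega] using this
  rcases Nat.eq_zero_or_pos m with rfl | hm
  · simp [Nat.factorial]
  · have h4 := Nat.four_pow_le_two_mul_self_mul_centralBinom m hm
    calc 4 ^ m * (m.factorial * m.factorial)
        ≤ 2 * m * m.centralBinom * (m.factorial * m.factorial) :=
          Nat.mul_le_mul_right _ h4
      _ = 2 * m * (m.centralBinom * m.factorial * m.factorial) := by ring
      _ = 2 * m * (2 * m).factorial := by rw [hcb]
      _ ≤ 3 * (m + 1) * (2 * m).factorial := Nat.mul_le_mul_right _ (by omega)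

lemma two_pow_sq (m : ℕ) : ((2 : ℝ) ^ m) ^ 2 = 4 ^ m := by
  rw [← pow_mul, mul_comm, pow_mul]; norm_num

lemma A_pos (m : ℕ) : 0 < A m := by
  unfold A
  have h1 : (0 : ℝ) < Real.sqrt ((2 * m).factorial) :=
    Real.sqrt_pos.2 (by exact_mod_cast (2 * m).factorial_pos)
  positivity

lemma B_pos (m : ℕ) : 0 < B m := by
  unfold B
  have h1 : (0 : ℝ) < Real.sqrt ((2 * m + 1).factorial) :=
    Real.sqrt_pos.2 (by exact_mod_cast (2 * m + 1).factorial_pos)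
  positivity

lemma A_sq (m : ℕ) :
    A m ^ 2 = ((2 * m).factorial : ℝ) / (4 ^ m * (m.factorial * m.factorial)) := by
  rw [A, div_pow, Real.sq_sqrt (by positivity), mul_pow, two_pow_sq, sq]

lemma B_sq (m : ℕ) :
    B m ^ 2 = ((2 * m + 1).factorial : ℝ) / (4 ^ m * (m.factorial * m.factorial)) := by
  rw [B, div_pow, Real.sq_sqrt (by positivity), mul_pow, two_pow_sq, sq]

lemma A_sq_ge (m : ℕ) : 1 / (3 * ((m : ℝ) + 1)) ≤ A m ^ 2 := by
  rw [A_sq, div_le_div_iff₀ (by positivity) (by positivity)]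
  have h := nat_key m
  have h' : ((4 ^ m * (m.factorial * m.factorial) : ℕ) : ℝ)
      ≤ ((3 * (m + 1) * (2 * m).factorial : ℕ) : ℝ) := by exact_mod_cast h
  push_cast at h'
  nlinarith [h']

lemma B_sq_ge (m : ℕ) : 1 / (3 * ((m : ℝ) + 1)) ≤ B m ^ 2 := by
  refine le_trans (A_sq_ge m) ?_
  rw [A_sq, B_sq]
  apply div_le_div_of_nonneg_right ?_ (by positivity)
  · exact_mod_cast Nat.factorial_le (by omega)

lemma key_div {c : ℕ → ℝ} (hc : Summable fun m => c m ^ 2) {C : ℝ} (hC : 0 < C) (n : ℕ)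
    (h : ∀ m, n < m → C / (3 * ((m : ℝ) + 1)) ≤ c m ^ 2) : False := by
  have h1 : Summable fun m => c (m + (n + 1)) ^ 2 := (summable_nat_add_iff (f := fun m => c m ^ 2) (n + 1)).2 hc
  have h2 : Summable fun m : ℕ => C / (3 * ((m : ℝ) + (n + 1) + 1)) := by
    refine h1.of_nonneg_of_le (fun m => by positivity) (fun m => ?_)
    have := h (m + (n + 1)) (by omega)
    convert this using 3
    push_cast; ring
  have h3 : Summable fun m : ℕ => 1 / ((m : ℝ) + (n + 2)) := by
    refine (h2.mul_left (3 / C)).congr fun m => ?_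
    field_simp
    ring
  have h4 : Summable fun m : ℕ => 1 / (m : ℝ) := by
    rw [← summable_nat_add_iff (f := fun m : ℕ => 1 / (m : ℝ)) (n + 2)]
    refine h3.congr fun m => ?_
    push_cast; ring_nf
  exact Real.not_summable_one_div_natCast h4

theorem span_basic_vectors_dense
    (hb : HilbertBasis ℕ ℝ (Lp ℝ 2 (volume : Measure ℝ)))
    (hψ : ∀ k, (hb k : ℝ → ℝ) =ᵐ[volume] ψ k) (n : ℕ) :
    Dense (↑(Submodule.span ℝ
      {x : Lp ℝ 2 (volume : Measure ℝ) | ∃ m, m ≠ n ∧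
        (x = A n • hb (2 * m) - A m • hb (2 * n) ∨
          x = B n • hb (2 * m + 1) - B m • hb (2 * n + 1))}) :
      Set (Lp ℝ 2 (volume : Measure ℝ))) := by
  rw [Submodule.dense_iff_topologicalClosure_eq_top,
    Submodule.topologicalClosure_eq_top_iff, eq_bot_iff]
  intro f hf
  rw [Submodule.mem_orthogonal] at hf
  rw [Submodule.mem_bot]
  set c : ℕ → ℝ := fun k => hb.repr f k with hc
  -- orthogonality relations
  have heven : ∀ m, m ≠ n → A n * c (2 * m) = A m * c (2 * n) := by
    intro m hm
    have hx := hf _ (Submodule.subset_span ⟨m, hm, Or.inl rfl⟩)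
    rw [inner_sub_left, real_inner_smul_left, real_inner_smul_left] at hx
    rw [hc]
    simp only [hb.repr_apply_apply]
    linarith
  have hodd : ∀ m, m ≠ n → B n * c (2 * m + 1) = B m * c (2 * n + 1) := by
    intro m hm
    have hx := hf _ (Submodule.subset_span ⟨m, hm, Or.inr rfl⟩)
    rw [inner_sub_left, real_inner_smul_left, real_inner_smul_left] at hx
    rw [hc]
    simp only [hb.repr_apply_apply]
    linarith
  -- summability of squared coefficients
  have hs : Summable fun k => c k ^ 2 := by
    have hm := lp.memℓp (hb.repr f)
    rw [memℓp_gen_iff (by norm_num)] at hm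
    refine hm.congr fun k => ?_
    rw [show ((2 : ENNReal).toReal) = ((2 : ℕ) : ℝ) by norm_num, Real.rpow_natCast,
      Real.norm_eq_abs, sq_abs]
  have hseven : Summable fun m => c (2 * m) ^ 2 :=
    hs.comp_injective fun a b hab => by omega
  have hsodd : Summable fun m => c (2 * m + 1) ^ 2 :=
    hs.comp_injective fun a b hab => by omega
  -- the even "seed" coefficient vanishes
  have hev0 : c (2 * n) = 0 := by
    by_contra ht
    have hC : (c (2 * n) / A n) ^ 2 ≠ 0 :=
      pow_ne_zero _ (div_ne_zero ht (A_pos n).ne')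
    refine key_div hseven (lt_of_le_of_ne (sq_nonneg _) (Ne.symm hC)) n fun m hm => ?_
    have hrel := heven m (by omega)
    have hcm : c (2 * m) = A m * (c (2 * n) / A n) := by
      rw [mul_div_assoc', eq_div_iff (A_pos n).ne']
      linear_combination hrel
    calc (c (2 * n) / A n) ^ 2 / (3 * ((m : ℝ) + 1))
        = 1 / (3 * ((m : ℝ) + 1)) * (c (2 * n) / A n) ^ 2 := by ring
      _ ≤ A m ^ 2 * (c (2 * n) / A n) ^ 2 := by
          apply mul_le_mul_of_nonneg_right (A_sq_ge m) (sq_nonneg _)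
      _ = c (2 * m) ^ 2 := by rw [hcm]; ring
  have hod0 : c (2 * n + 1) = 0 := by
    by_contra ht
    have hC : (c (2 * n + 1) / B n) ^ 2 ≠ 0 := by
      exact pow_ne_zero _ (div_ne_zero ht (B_pos n).ne')
    refine key_div hsodd (lt_of_le_of_ne (sq_nonneg _) (Ne.symm hC)) n fun m hm => ?_
    have hrel := hodd m (by omega)
    have hcm : c (2 * m + 1) = B m * (c (2 * n + 1) / B n) := by
      rw [mul_div_assoc', eq_div_iff (B_pos n).ne']
      linear_combination hrel
    calc (c (2 * n + 1) / B n) ^ 2 / (3 * ((m : ℝ) + 1))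
        = 1 / (3 * ((m : ℝ) + 1)) * (c (2 * n + 1) / B n) ^ 2 := by ring
      _ ≤ B m ^ 2 * (c (2 * n + 1) / B n) ^ 2 := by
          apply mul_le_mul_of_nonneg_right (B_sq_ge m) (sq_nonneg _)
      _ = c (2 * m + 1) ^ 2 := by rw [hcm]; ring
  -- therefore all coefficients vanish
  have hall : ∀ k, c k = 0 := by
    intro k
    rcases Nat.even_or_odd k with ⟨m, hk⟩ | ⟨m, hk⟩
    · subst hk
      rcases eq_or_ne m n with rfl | hm
      · simpa [two_mul] using hev0
      · have := heven m hm
        rw [hev0, mul_zero] at this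
        have := mul_eq_zero.1 this
        rcases this with h | h
        · exact absurd h (A_pos n).ne'
        · simpa [two_mul] using h
    · subst hk
      rcases eq_or_ne m n with rfl | hm
      · simpa [two_mul] using hod0
      · have := hodd m hm
        rw [hod0, mul_zero] at this
        rcases mul_eq_zero.1 this with h | h
        · exact absurd h (B_pos n).ne'
        · simpa [two_mul] using h
  have : hb.repr f = 0 := by
    ext k
    simpa using hall k
  simpa [Submodule.mem_bot] using hb.repr.map_eq_zero_iff.1 this
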